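/- (Effect-size probability in the Normal–Normal model.) Let θ₁ < θ₀. Then there exist a constant C > 0 and an integer N such that for all n ≥ N, |E_{θ₀}[W((θ₁, ∞)|Xⁿ)] − (1 − Φ(√n(θ₁ − θ₀)/(√2 σ₀)))| ≤ C n^{−1/2}; in particular E_{θ₀}[W((θ₁, ∞)|Xⁿ)] = 1 − Φ(√(n/2)(θ₁ − θ₀)/σ₀) + O(n^{−1/2}) → 1. -/

import Mathlib

open MeasureTheory ProbabilityTheory Real Filter

/-- The density of the standard normal law `N(0,1)`. -/
noncomputable def stdNormalPDF (z : ℝ) : ℝ :=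
  (Real.sqrt (2 * Real.pi))⁻¹ * Real.exp (-(z ^ 2) / 2)

/-- The distribution function of the standard normal law `N(0,1)`. -/
noncomputable def stdNormalCDF (x : ℝ) : ℝ :=
  ∫ z in Set.Iic x, stdNormalPDF z

/-- Prior density times likelihood for the Normal–Normal model. -/
noncomputable def nnKernel (n : ℕ) (μ₀ τ₀ σ₀ : ℝ) (x : Fin n → ℝ) (θ : ℝ) : ℝ :=
  Real.exp (-(θ - μ₀) ^ 2 / (2 * τ₀ ^ 2))
    * ∏ i, Real.exp (-(x i - θ) ^ 2 / (2 * σ₀ ^ 2))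

/-- The posterior distribution of `θ` given the data `x`. -/
noncomputable def nnPosterior (n : ℕ) (μ₀ τ₀ σ₀ : ℝ) (x : Fin n → ℝ) : Measure ℝ :=
  (∫⁻ θ : ℝ, ENNReal.ofReal (nnKernel n μ₀ τ₀ σ₀ x θ))⁻¹
    • volume.withDensity (fun θ => ENNReal.ofReal (nnKernel n μ₀ τ₀ σ₀ x θ))

/-- The law of the data `Xⁿ` i.i.d. `N(θ₀, σ₀²)`. -/
noncomputable def nnData (n : ℕ) (θ₀ σ₀ : ℝ) : Measure (Fin n → ℝ) :=
  Measure.pi fun _ => gaussianReal θ₀ (Real.toNNReal (σ₀ ^ 2))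

open scoped NNReal ENNReal Topology

/-!
Put `d = (θ₀ - θ₁)/2`. Both `E_{θ₀}[W((-∞, θ₁] | Xⁿ)] = 1 - E_{θ₀}[W((θ₁, ∞) | Xⁿ)]` and
`Φ(√n(θ₁ - θ₀)/(√2 σ₀))` are `O(√n e^{-n d²/(2σ₀²)})`, hence both are `o(n^{-1/2})`.

For `Φ` this is the sub-Gaussian tail bound `Φ(-s) ≤ e^{-s²/2}`. For the posterior: the likelihood
is proportional to `exp(-n(θ - X̄)²/(2σ₀²))`. If `|X̄ - θ₀| < d`, then on `(-∞, θ₁]` this factor is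
at most `e^{-n d²/(2σ₀²)}`, while on the window `[X̄, X̄ + n^{-1/2}]` it is at least `e^{-1/(2σ₀²)}`
and the prior density is bounded below. So the posterior mass of `(-∞, θ₁]` is
`O(√n e^{-n d²/(2σ₀²)})`. The event `|X̄ - θ₀| ≥ d` has probability at most
`2 e^{-n d²/(2σ₀²)}` by the Chernoff bound for the Gaussian sample sum.
-/

namespace ProbabilityTheory

lemma hasSubgaussianMGF_sub_gaussianReal (μ : ℝ) (v : ℝ≥0) :
    HasSubgaussianMGF (fun y => y - μ) v (gaussianReal μ v) where
  integrable_exp_mul t := by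
    simp_rw [mul_sub, Real.exp_sub]
    exact (integrable_exp_mul_gaussianReal t).div_const _
  mgf_le t := by
    rw [mgf_gaussianReal (gaussianReal_map_sub_const μ), sub_self, zero_mul, zero_add]

lemma hasSubgaussianMGF_sum_sub_pi_gaussianReal {ι : Type*} [Fintype ι] (μ : ℝ) (v : ℝ≥0) :
    HasSubgaussianMGF (fun x : ι → ℝ => ∑ i, (x i - μ)) (Fintype.card ι * v)
      (Measure.pi fun _ => gaussianReal μ v) := by
  have hindep := iIndepFun_pi (μ := fun _ : ι => gaussianReal μ v)
    (X := fun _ y => y - μ) fun _ => by fun_prop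
  have hcoord (i : ι) : HasSubgaussianMGF (fun x : ι → ℝ => x i - μ) v
      (Measure.pi fun _ => gaussianReal μ v) := by
    refine HasSubgaussianMGF.of_map (X := fun y : ℝ => y - μ) (Y := fun x : ι → ℝ => x i)
      (measurable_pi_apply i).aemeasurable ?_
    rw [(measurePreserving_eval (fun _ : ι => gaussianReal μ v) i).map_eq]
    exact hasSubgaussianMGF_sub_gaussianReal μ v
  simpa using HasSubgaussianMGF.sum_of_iIndepFun hindep (c := fun _ => v) (s := Finset.univ)
    fun i _ => hcoord i

lemma HasSubgaussianMGF.measureReal_abs_ge_le {Ω : Type*} {mΩ : MeasurableSpace Ω}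
    {μ : Measure Ω} [IsFiniteMeasure μ] {X : Ω → ℝ} {c : ℝ≥0} (h : HasSubgaussianMGF X c μ)
    {ε : ℝ} (hε : 0 ≤ ε) :
    μ.real {ω | ε ≤ |X ω|} ≤ 2 * exp (-ε ^ 2 / (2 * c)) := by
  have hsplit : {ω | ε ≤ |X ω|} ⊆ {ω | ε ≤ X ω} ∪ {ω | ε ≤ (-X) ω} :=
    fun ω (hω : ε ≤ |X ω|) => (le_abs'.mp hω).elim
      (fun h' => Or.inr (show ε ≤ -X ω by linarith)) Or.inl
  calc μ.real {ω | ε ≤ |X ω|}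
      ≤ μ.real {ω | ε ≤ X ω} + μ.real {ω | ε ≤ (-X) ω} :=
        (measureReal_mono hsplit).trans (measureReal_union_le _ _)
    _ ≤ exp (-ε ^ 2 / (2 * c)) + exp (-ε ^ 2 / (2 * c)) :=
        add_le_add (h.measure_ge_le hε) (h.neg.measure_ge_le hε)
    _ = 2 * exp (-ε ^ 2 / (2 * c)) := by ring

end ProbabilityTheory

lemma stdNormalCDF_eq_gaussianReal (t : ℝ) :
    stdNormalCDF t = (gaussianReal 0 1).real (Set.Iic t) := by
  rw [measureReal_def, gaussianReal_apply_eq_integral 0 one_ne_zero,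
    ENNReal.toReal_ofReal (integral_nonneg fun _ => gaussianPDFReal_nonneg _ _ _)]
  simp [stdNormalCDF, stdNormalPDF, gaussianPDFReal]

lemma stdNormalCDF_nonneg (t : ℝ) : 0 ≤ stdNormalCDF t := by
  rw [stdNormalCDF_eq_gaussianReal]
  exact measureReal_nonneg

lemma stdNormalCDF_le_exp {t : ℝ} (ht : t ≤ 0) : stdNormalCDF t ≤ exp (-t ^ 2 / 2) := by
  have h := (hasSubgaussianMGF_sub_gaussianReal 0 1).neg.measure_ge_le (neg_nonneg.mpr ht)
  rw [stdNormalCDF_eq_gaussianReal]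
  convert h using 2
  · ext y; simp
  · simp

lemma stdNormalCDF_le_exp_of_add_two_mul_le {σ₀ θ₀ θ₁ d : ℝ} (hσ : 0 < σ₀)
    (hθ : θ₁ + 2 * d ≤ θ₀) (hd : 0 ≤ d) (n : ℕ) :
    stdNormalCDF (√n * (θ₁ - θ₀) / (√2 * σ₀)) ≤ exp (-(n * d ^ 2) / (2 * σ₀ ^ 2)) := by
  refine (stdNormalCDF_le_exp (div_nonpos_of_nonpos_of_nonneg
    (mul_nonpos_of_nonneg_of_nonpos (Real.sqrt_nonneg _) (by linarith)) (by positivity))).trans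
    (exp_le_exp.mpr ?_)
  have ht : (√n * (θ₁ - θ₀) / (√2 * σ₀)) ^ 2 = n * (θ₀ - θ₁) ^ 2 / (2 * σ₀ ^ 2) := by
    rw [div_pow, mul_pow, mul_pow, Real.sq_sqrt (Nat.cast_nonneg n), Real.sq_sqrt zero_le_two]
    ring
  have hgap : 4 * d ^ 2 ≤ (θ₀ - θ₁) ^ 2 := by nlinarith
  rw [ht, neg_div, neg_div, neg_le_neg_iff, div_div,
    div_le_div_iff₀ (by positivity) (by positivity)]
  nlinarith [mul_le_mul_of_nonneg_left hgap (by positivity : (0 : ℝ) ≤ n * (2 * σ₀ ^ 2)),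
    (by positivity : (0 : ℝ) ≤ n * d ^ 2 * σ₀ ^ 2)]

section NormalizedDensity

variable {α : Type*} [MeasurableSpace α] {ν : Measure α} {f : α → ℝ}

lemma toReal_smul_withDensity_ofReal_apply (hf : Integrable f ν) (hf0 : 0 ≤ f) {A : Set α}
    (hA : MeasurableSet A) :
    (((∫⁻ a, ENNReal.ofReal (f a) ∂ν)⁻¹ • ν.withDensity fun a => ENNReal.ofReal (f a)) A).toReal
      = (∫ a in A, f a ∂ν) / ∫ a, f a ∂ν := by
  rw [Measure.smul_apply, withDensity_apply _ hA, smul_eq_mul, ENNReal.toReal_mul,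
    ENNReal.toReal_inv, ← ofReal_integral_eq_lintegral_ofReal hf (ae_of_all _ hf0),
    ← ofReal_integral_eq_lintegral_ofReal hf.restrict (ae_of_all _ hf0),
    ENNReal.toReal_ofReal (integral_nonneg hf0),
    ENNReal.toReal_ofReal (setIntegral_nonneg hA fun a _ => hf0 a), inv_mul_eq_div]

lemma isProbabilityMeasure_smul_withDensity_ofReal (hf : Integrable f ν) (hf0 : 0 ≤ f)
    (hpos : 0 < ∫ a, f a ∂ν) :
    IsProbabilityMeasure
      ((∫⁻ a, ENNReal.ofReal (f a) ∂ν)⁻¹ • ν.withDensity fun a => ENNReal.ofReal (f a)) := by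
  constructor
  rw [Measure.smul_apply, withDensity_apply _ MeasurableSet.univ, Measure.restrict_univ,
    smul_eq_mul, ← ofReal_integral_eq_lintegral_ofReal hf (ae_of_all _ hf0)]
  exact ENNReal.inv_mul_cancel (ENNReal.ofReal_pos.mpr hpos).ne' ENNReal.ofReal_ne_top

end NormalizedDensity

lemma integrable_exp_neg_sq_sub_div (m : ℝ) {s : ℝ} (hs : s ≠ 0) :
    Integrable fun θ : ℝ => exp (-(θ - m) ^ 2 / (2 * s ^ 2)) := by
  convert (integrable_exp_neg_mul_sq (b := (2 * s ^ 2)⁻¹) (by positivity)).comp_sub_right m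
    using 2 with θ
  ring_nf

/-- The sample mean, with the junk value `0` for `n = 0`. -/
noncomputable def sampleMean {n : ℕ} (x : Fin n → ℝ) : ℝ := (∑ i, x i) / n

lemma sum_sub_eq_mul_sampleMean_sub {n : ℕ} (x : Fin n → ℝ) (a : ℝ) :
    ∑ i, (x i - a) = n * (sampleMean x - a) := by
  rcases eq_or_ne n 0 with rfl | hn
  · simp
  · rw [Finset.sum_sub_distrib, Finset.sum_const, Finset.card_univ, Fintype.card_fin,
      nsmul_eq_mul, sampleMean, mul_sub, mul_div_cancel₀ _ (Nat.cast_ne_zero.mpr hn)]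

lemma sum_sub_sq_eq_sum_sub_sampleMean_sq_add {n : ℕ} (x : Fin n → ℝ) (θ : ℝ) :
    ∑ i, (x i - θ) ^ 2 = ∑ i, (x i - sampleMean x) ^ 2 + n * (θ - sampleMean x) ^ 2 := by
  have hcentre := sum_sub_eq_mul_sampleMean_sub x (sampleMean x)
  rw [sub_self, mul_zero] at hcentre
  simp_rw [show ∀ i, (x i - θ) ^ 2 = (x i - sampleMean x) ^ 2
    + 2 * (sampleMean x - θ) * (x i - sampleMean x) + (θ - sampleMean x) ^ 2 from fun i => by ring]
  rw [Finset.sum_add_distrib, Finset.sum_add_distrib, ← Finset.mul_sum, hcentre,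
    Finset.sum_const, Finset.card_univ, Fintype.card_fin, nsmul_eq_mul, mul_zero, add_zero]

noncomputable def nnMeanKernel (n : ℕ) (μ₀ τ₀ σ₀ b θ : ℝ) : ℝ :=
  exp (-(θ - μ₀) ^ 2 / (2 * τ₀ ^ 2)) * exp (-(n * (θ - b) ^ 2) / (2 * σ₀ ^ 2))

section Posterior

variable {n : ℕ} {μ₀ τ₀ σ₀ : ℝ}

lemma nnKernel_eq_mul_nnMeanKernel (x : Fin n → ℝ) (θ : ℝ) :
    nnKernel n μ₀ τ₀ σ₀ x θ = exp (-(∑ i, (x i - sampleMean x) ^ 2) / (2 * σ₀ ^ 2))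
      * nnMeanKernel n μ₀ τ₀ σ₀ (sampleMean x) θ := by
  rw [nnKernel, nnMeanKernel, ← Real.exp_sum, ← Finset.sum_div, Finset.sum_neg_distrib,
    sum_sub_sq_eq_sum_sub_sampleMean_sq_add, neg_add, add_div, Real.exp_add]
  ring

lemma nnMeanKernel_le (b θ : ℝ) :
    nnMeanKernel n μ₀ τ₀ σ₀ b θ ≤ exp (-(θ - μ₀) ^ 2 / (2 * τ₀ ^ 2)) := by
  refine mul_le_of_le_one_right (exp_nonneg _) (exp_le_one_iff.mpr ?_)
  exact div_nonpos_of_nonpos_of_nonneg (neg_nonpos.mpr (by positivity)) (by positivity)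

lemma continuous_nnMeanKernel (b : ℝ) : Continuous (nnMeanKernel n μ₀ τ₀ σ₀ b) := by
  unfold nnMeanKernel
  fun_prop

lemma integrable_nnMeanKernel (hτ : τ₀ ≠ 0) (b : ℝ) :
    Integrable (nnMeanKernel n μ₀ τ₀ σ₀ b) := by
  refine (integrable_exp_neg_sq_sub_div μ₀ hτ).mono'
    (continuous_nnMeanKernel b).aestronglyMeasurable (ae_of_all _ fun θ => ?_)
  rw [Real.norm_of_nonneg (by unfold nnMeanKernel; positivity)]
  exact nnMeanKernel_le b θ

lemma integral_nnMeanKernel_pos (hτ : τ₀ ≠ 0) (b : ℝ) :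
    0 < ∫ θ, nnMeanKernel n μ₀ τ₀ σ₀ b θ := by
  have hint := integrable_nnMeanKernel (n := n) (μ₀ := μ₀) (σ₀ := σ₀) hτ b
  unfold nnMeanKernel at hint ⊢
  simp_rw [← Real.exp_add] at hint ⊢
  exact integral_exp_pos hint

lemma integrable_nnKernel (hτ : τ₀ ≠ 0) (x : Fin n → ℝ) :
    Integrable (nnKernel n μ₀ τ₀ σ₀ x) := by
  simp_rw [funext (nnKernel_eq_mul_nnMeanKernel x)]
  exact (integrable_nnMeanKernel hτ _).const_mul _

lemma nnKernel_nonneg (x : Fin n → ℝ) : 0 ≤ nnKernel n μ₀ τ₀ σ₀ x := fun θ => by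
  unfold nnKernel
  positivity

lemma nnPosterior_toReal_apply (hτ : τ₀ ≠ 0) (x : Fin n → ℝ) {A : Set ℝ} (hA : MeasurableSet A) :
    (nnPosterior n μ₀ τ₀ σ₀ x A).toReal
      = (∫ θ in A, nnKernel n μ₀ τ₀ σ₀ x θ) / ∫ θ, nnKernel n μ₀ τ₀ σ₀ x θ :=
  toReal_smul_withDensity_ofReal_apply (integrable_nnKernel hτ x) (nnKernel_nonneg x) hA

lemma nnPosterior_toReal_apply_eq_nnMeanKernel (hτ : τ₀ ≠ 0) (x : Fin n → ℝ) {A : Set ℝ}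
    (hA : MeasurableSet A) :
    (nnPosterior n μ₀ τ₀ σ₀ x A).toReal
      = (∫ θ in A, nnMeanKernel n μ₀ τ₀ σ₀ (sampleMean x) θ)
        / ∫ θ, nnMeanKernel n μ₀ τ₀ σ₀ (sampleMean x) θ := by
  simp_rw [nnPosterior_toReal_apply hτ x hA, nnKernel_eq_mul_nnMeanKernel x,
    integral_const_mul]
  exact mul_div_mul_left _ _ (exp_pos _).ne'

lemma isProbabilityMeasure_nnPosterior (hτ : τ₀ ≠ 0) (x : Fin n → ℝ) :
    IsProbabilityMeasure (nnPosterior n μ₀ τ₀ σ₀ x) := by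
  refine isProbabilityMeasure_smul_withDensity_ofReal (integrable_nnKernel hτ x)
    (nnKernel_nonneg x) ?_
  simp_rw [nnKernel_eq_mul_nnMeanKernel x, integral_const_mul]
  exact mul_pos (exp_pos _) (integral_nnMeanKernel_pos hτ _)

end Posterior

section PosteriorBounds

variable {n : ℕ} {μ₀ τ₀ σ₀ : ℝ}

lemma setIntegral_Iic_nnMeanKernel_le (hτ : τ₀ ≠ 0) {b d θ₁ : ℝ} (hd : 0 ≤ d)
    (hb : θ₁ + d ≤ b) :
    ∫ θ in Set.Iic θ₁, nnMeanKernel n μ₀ τ₀ σ₀ b θ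
      ≤ exp (-(n * d ^ 2) / (2 * σ₀ ^ 2)) * ∫ θ, exp (-(θ - μ₀) ^ 2 / (2 * τ₀ ^ 2)) := by
  have hprior := integrable_exp_neg_sq_sub_div μ₀ hτ
  calc ∫ θ in Set.Iic θ₁, nnMeanKernel n μ₀ τ₀ σ₀ b θ
      ≤ ∫ θ in Set.Iic θ₁,
          exp (-(n * d ^ 2) / (2 * σ₀ ^ 2)) * exp (-(θ - μ₀) ^ 2 / (2 * τ₀ ^ 2)) := by
        refine setIntegral_mono_on (integrable_nnMeanKernel hτ b).integrableOn
          (hprior.const_mul _).integrableOn measurableSet_Iic fun θ hθ => ?_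
        have hdist : d ^ 2 ≤ (θ - b) ^ 2 := by
          nlinarith [Set.mem_Iic.mp hθ]
        rw [nnMeanKernel, mul_comm]
        gcongr
    _ ≤ exp (-(n * d ^ 2) / (2 * σ₀ ^ 2)) * ∫ θ, exp (-(θ - μ₀) ^ 2 / (2 * τ₀ ^ 2)) := by
        rw [integral_const_mul]
        exact mul_le_mul_of_nonneg_left
          (setIntegral_le_integral hprior (ae_of_all _ fun _ => (exp_pos _).le)) (exp_pos _).le

lemma le_integral_nnMeanKernel (hτ : τ₀ ≠ 0) (hn : n ≠ 0) {b c : ℝ}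
    (hc : ∀ θ ∈ Set.Icc b (b + 1), c ≤ exp (-(θ - μ₀) ^ 2 / (2 * τ₀ ^ 2))) :
    c * exp (-1 / (2 * σ₀ ^ 2)) / √n ≤ ∫ θ, nnMeanKernel n μ₀ τ₀ σ₀ b θ := by
  have hn' : (0 : ℝ) < n := Nat.cast_pos.mpr (Nat.pos_of_ne_zero hn)
  set u := (√n)⁻¹ with hu
  have hu0 : 0 ≤ u := by positivity
  have hu1 : u ≤ 1 := inv_le_one_of_one_le₀ (Real.one_le_sqrt.mpr (Nat.one_le_cast.mpr
    (Nat.pos_of_ne_zero hn)))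
  calc c * exp (-1 / (2 * σ₀ ^ 2)) / √n
      = ∫ _ in Set.Icc b (b + u), c * exp (-1 / (2 * σ₀ ^ 2)) := by
        rw [setIntegral_const, Real.volume_real_Icc_of_le (by linarith), add_sub_cancel_left,
          smul_eq_mul, hu, div_eq_inv_mul]
    _ ≤ ∫ θ in Set.Icc b (b + u), nnMeanKernel n μ₀ τ₀ σ₀ b θ := by
        refine setIntegral_mono_on (integrableOn_const (by simp))
          (integrable_nnMeanKernel hτ b).integrableOn measurableSet_Icc fun θ hθ => ?_
        have hwindow : n * (θ - b) ^ 2 ≤ 1 := by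
          have hsq : (θ - b) ^ 2 ≤ u ^ 2 :=
            pow_le_pow_left₀ (by linarith [hθ.1]) (by linarith [hθ.2]) 2
          rw [hu, inv_pow, Real.sq_sqrt hn'.le] at hsq
          calc n * (θ - b) ^ 2 ≤ n * (n : ℝ)⁻¹ := by gcongr
            _ = 1 := mul_inv_cancel₀ hn'.ne'
        refine mul_le_mul (hc θ ⟨hθ.1, by linarith [hθ.2]⟩) ?_ (exp_pos _).le (exp_pos _).le
        gcongr
    _ ≤ ∫ θ, nnMeanKernel n μ₀ τ₀ σ₀ b θ :=
        setIntegral_le_integral (integrable_nnMeanKernel hτ b)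
          (ae_of_all _ fun θ => by unfold nnMeanKernel; positivity)

lemma nnPosterior_Iic_le (hτ : τ₀ ≠ 0) (hn : n ≠ 0) (x : Fin n → ℝ) {θ₁ d c : ℝ} (hd : 0 ≤ d)
    (hx : θ₁ + d ≤ sampleMean x) (hc0 : 0 < c)
    (hc : ∀ θ ∈ Set.Icc (sampleMean x) (sampleMean x + 1),
      c ≤ exp (-(θ - μ₀) ^ 2 / (2 * τ₀ ^ 2))) :
    (nnPosterior n μ₀ τ₀ σ₀ x (Set.Iic θ₁)).toReal
      ≤ (∫ θ, exp (-(θ - μ₀) ^ 2 / (2 * τ₀ ^ 2))) / (c * exp (-1 / (2 * σ₀ ^ 2)))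
        * √n * exp (-(n * d ^ 2) / (2 * σ₀ ^ 2)) := by
  have hsqrt : 0 < √(n : ℝ) := Real.sqrt_pos.mpr (Nat.cast_pos.mpr (Nat.pos_of_ne_zero hn))
  rw [nnPosterior_toReal_apply_eq_nnMeanKernel hτ x measurableSet_Iic]
  calc _ ≤ (exp (-(n * d ^ 2) / (2 * σ₀ ^ 2)) * ∫ θ, exp (-(θ - μ₀) ^ 2 / (2 * τ₀ ^ 2)))
        / (c * exp (-1 / (2 * σ₀ ^ 2)) / √n) :=
      div_le_div₀ (mul_nonneg (exp_pos _).le (integral_nonneg fun _ => (exp_pos _).le))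
        (setIntegral_Iic_nnMeanKernel_le hτ hd hx) (by positivity)
        (le_integral_nnMeanKernel hτ hn hc)
    _ = _ := by field_simp

end PosteriorBounds

section Data

variable {n : ℕ} {μ₀ τ₀ σ₀ θ₀ : ℝ}

instance isProbabilityMeasure_nnData : IsProbabilityMeasure (nnData n θ₀ σ₀) := by
  unfold nnData
  infer_instance

lemma measurable_nnPosterior_toReal (hτ : τ₀ ≠ 0) {A : Set ℝ} (hA : MeasurableSet A) :
    Measurable fun x : Fin n → ℝ => (nnPosterior n μ₀ τ₀ σ₀ x A).toReal := by
  have hk : StronglyMeasurable fun p : (Fin n → ℝ) × ℝ => nnKernel n μ₀ τ₀ σ₀ p.1 p.2 := by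
    unfold nnKernel
    exact Continuous.stronglyMeasurable (by fun_prop)
  simp only [nnPosterior_toReal_apply hτ _ hA]
  exact (hk.integral_prod_right' (ν := volume.restrict A)).measurable.div
    (hk.integral_prod_right' (ν := volume)).measurable

lemma integrable_nnPosterior_toReal (hτ : τ₀ ≠ 0) {A : Set ℝ} (hA : MeasurableSet A) :
    Integrable (fun x => (nnPosterior n μ₀ τ₀ σ₀ x A).toReal) (nnData n θ₀ σ₀) := by
  refine (integrable_const (1 : ℝ)).mono' (measurable_nnPosterior_toReal hτ hA).aestronglyMeasurable
    (ae_of_all _ fun x => ?_)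
  have := isProbabilityMeasure_nnPosterior (μ₀ := μ₀) (σ₀ := σ₀) hτ x
  rw [Real.norm_of_nonneg ENNReal.toReal_nonneg, ← measureReal_def]
  exact measureReal_le_one

lemma integral_nnPosterior_Ioi (hτ : τ₀ ≠ 0) (θ₁ : ℝ) :
    ∫ x, (nnPosterior n μ₀ τ₀ σ₀ x (Set.Ioi θ₁)).toReal ∂nnData n θ₀ σ₀
      = 1 - ∫ x, (nnPosterior n μ₀ τ₀ σ₀ x (Set.Iic θ₁)).toReal ∂nnData n θ₀ σ₀ := by
  have hcompl : ∀ x, (nnPosterior n μ₀ τ₀ σ₀ x (Set.Ioi θ₁)).toReal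
      = 1 - (nnPosterior n μ₀ τ₀ σ₀ x (Set.Iic θ₁)).toReal := fun x => by
    have := isProbabilityMeasure_nnPosterior (μ₀ := μ₀) (σ₀ := σ₀) hτ x
    rw [← Set.compl_Iic, ← measureReal_def, ← measureReal_def,
      probReal_compl_eq_one_sub measurableSet_Iic]
  simp_rw [hcompl]
  rw [integral_sub (integrable_const 1) (integrable_nnPosterior_toReal hτ measurableSet_Iic),
    integral_const, probReal_univ, one_smul]

lemma nnData_real_abs_sum_sub_ge_le (hσ : σ₀ ≠ 0) (hn : n ≠ 0) {d : ℝ} (hd : 0 ≤ d) :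
    (nnData n θ₀ σ₀).real {x | n * d ≤ |∑ i, (x i - θ₀)|}
      ≤ 2 * exp (-(n * d ^ 2) / (2 * σ₀ ^ 2)) := by
  have h := (hasSubgaussianMGF_sum_sub_pi_gaussianReal (ι := Fin n) θ₀
    (σ₀ ^ 2).toNNReal).measureReal_abs_ge_le (ε := n * d) (by positivity)
  have hn' : (n : ℝ) ≠ 0 := Nat.cast_ne_zero.mpr hn
  rw [nnData]
  convert h using 3
  push_cast
  rw [Real.coe_toNNReal _ (sq_nonneg _), Fintype.card_fin]
  field_simp

lemma exists_integral_nnPosterior_Iic_le (hσ : σ₀ ≠ 0) (hτ : τ₀ ≠ 0) {θ₁ d : ℝ} (hd : 0 < d)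
    (hθ : θ₁ + 2 * d ≤ θ₀) :
    ∃ K, ∀ n : ℕ, n ≠ 0 → ∫ x, (nnPosterior n μ₀ τ₀ σ₀ x (Set.Iic θ₁)).toReal ∂nnData n θ₀ σ₀
      ≤ (K * √n + 2) * exp (-(n * d ^ 2) / (2 * σ₀ ^ 2)) := by
  obtain ⟨θmin, -, hmin⟩ := isCompact_Icc.exists_isMinOn
    (Set.nonempty_Icc.2 (by linarith : θ₀ - d ≤ θ₀ + d + 1))
    (by fun_prop : Continuous fun θ => exp (-(θ - μ₀) ^ 2 / (2 * τ₀ ^ 2))).continuousOn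
  set K := (∫ θ, exp (-(θ - μ₀) ^ 2 / (2 * τ₀ ^ 2)))
    / (exp (-(θmin - μ₀) ^ 2 / (2 * τ₀ ^ 2)) * exp (-1 / (2 * σ₀ ^ 2)))
  refine ⟨K, fun n hn => ?_⟩
  set r := exp (-(n * d ^ 2) / (2 * σ₀ ^ 2))
  set E := {x : Fin n → ℝ | n * d ≤ |∑ i, (x i - θ₀)|}
  have hK : 0 ≤ K * √n * r :=
    mul_nonneg (mul_nonneg (div_nonneg (integral_nonneg fun _ => (exp_pos _).le)
      (by positivity)) (Real.sqrt_nonneg _)) (exp_pos _).le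
  have hE : MeasurableSet E := measurableSet_le measurable_const (by fun_prop)
  have hpointwise : ∀ x, (nnPosterior n μ₀ τ₀ σ₀ x (Set.Iic θ₁)).toReal
      ≤ K * √n * r + E.indicator 1 x := by
    intro x
    by_cases hx : x ∈ E
    · have := isProbabilityMeasure_nnPosterior (μ₀ := μ₀) (σ₀ := σ₀) hτ x
      rw [Set.indicator_of_mem hx, Pi.one_apply, ← measureReal_def]
      linarith [measureReal_le_one (μ := nnPosterior n μ₀ τ₀ σ₀ x) (s := Set.Iic θ₁)]
    · have hmean : |sampleMean x - θ₀| < d := by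
        simp only [E, Set.mem_ofPred_eq, not_le, sum_sub_eq_mul_sampleMean_sub, abs_mul,
          Nat.abs_cast] at hx
        exact lt_of_mul_lt_mul_left hx (Nat.cast_nonneg n)
      obtain ⟨hlo, hhi⟩ := abs_lt.mp hmean
      rw [Set.indicator_of_notMem hx, add_zero]
      exact nnPosterior_Iic_le hτ hn x hd.le (by linarith) (exp_pos _) fun θ hθ =>
        isMinOn_iff.mp hmin θ ⟨by linarith [hθ.1], by linarith [hθ.2]⟩
  calc ∫ x, (nnPosterior n μ₀ τ₀ σ₀ x (Set.Iic θ₁)).toReal ∂nnData n θ₀ σ₀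
      ≤ ∫ x, (K * √n * r + E.indicator 1 x) ∂nnData n θ₀ σ₀ :=
        integral_mono (integrable_nnPosterior_toReal hτ measurableSet_Iic)
          ((integrable_const _).add ((integrable_const 1).indicator hE)) hpointwise
    _ = K * √n * r + (nnData n θ₀ σ₀).real E := by
        rw [integral_add (integrable_const _) ((integrable_const 1).indicator hE),
          integral_const, integral_indicator_one hE, probReal_univ, one_smul]
    _ ≤ (K * √n + 2) * r := by linarith [nnData_real_abs_sum_sub_ge_le (θ₀ := θ₀) hσ hn hd.le]

end Data

lemma eventually_mul_pow_le_rpow_neg_half {r : ℝ} (hr0 : 0 ≤ r) (hr1 : r < 1) (A B : ℝ) :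
    ∀ᶠ n : ℕ in atTop, (A * √n + B) * r ^ n ≤ (n : ℝ) ^ (-(1 : ℝ) / 2) := by
  have hlim := (tendsto_pow_const_mul_const_pow_of_abs_lt_one 2
    (by rwa [abs_of_nonneg hr0])).const_mul (|A| + |B|)
  rw [mul_zero] at hlim
  filter_upwards [hlim.eventually_le_const one_pos, eventually_ge_atTop 1] with n hn hn1
  have hn1' : (1 : ℝ) ≤ n := Nat.one_le_cast.mpr hn1
  have hsqrt : √(n : ℝ) ≤ n := Real.sqrt_le_iff.mpr ⟨by positivity, by nlinarith⟩
  have hcoef : A * √n + B ≤ (|A| + |B|) * n := by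
    nlinarith [le_abs_self A, le_abs_self B, abs_nonneg A, abs_nonneg B, Real.sqrt_nonneg n]
  calc (A * √n + B) * r ^ n ≤ (|A| + |B|) * n * r ^ n :=
        mul_le_mul_of_nonneg_right hcoef (pow_nonneg hr0 n)
    _ = (|A| + |B|) * ((n : ℝ) ^ 2 * r ^ n) / n := by field_simp
    _ ≤ 1 / n := by gcongr
    _ = (n : ℝ) ^ (-1 : ℝ) := by rw [Real.rpow_neg_one, one_div]
    _ ≤ (n : ℝ) ^ (-(1 : ℝ) / 2) := Real.rpow_le_rpow_of_exponent_le hn1' (by norm_num)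

/-- Effect-size probability in the Normal–Normal model: for `θ₁ < θ₀`,
`|E_{θ₀}[W((θ₁,∞)|Xⁿ)] − (1 − Φ(√n(θ₁−θ₀)/(√2 σ₀)))| ≤ C n^{−1/2}` for all large `n`; in
particular `E_{θ₀}[W((θ₁,∞)|Xⁿ)] → 1`. -/
theorem normal_normal_effect_size
    (μ₀ τ₀ σ₀ θ₀ θ₁ : ℝ) (hσ : 0 < σ₀) (hτ : 0 < τ₀) (hθ : θ₁ < θ₀) :
    (∃ C : ℝ, 0 < C ∧ ∃ N : ℕ, ∀ n : ℕ, N ≤ n →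
        |(∫ x, (nnPosterior n μ₀ τ₀ σ₀ x (Set.Ioi θ₁)).toReal ∂nnData n θ₀ σ₀)
            - (1 - stdNormalCDF (Real.sqrt (n : ℝ) * (θ₁ - θ₀) / (Real.sqrt 2 * σ₀)))|
          ≤ C * (n : ℝ) ^ (-(1 : ℝ) / 2)) ∧
    Tendsto
      (fun n : ℕ => ∫ x, (nnPosterior n μ₀ τ₀ σ₀ x (Set.Ioi θ₁)).toReal ∂nnData n θ₀ σ₀)
      atTop (nhds 1) := by
  set d := (θ₀ - θ₁) / 2
  set F := fun n : ℕ => ∫ x, (nnPosterior n μ₀ τ₀ σ₀ x (Set.Iic θ₁)).toReal ∂nnData n θ₀ σ₀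
  set Φ := fun n : ℕ => stdNormalCDF (√n * (θ₁ - θ₀) / (√2 * σ₀))
  have hd : 0 < d := by simp only [d]; linarith
  have hgap : θ₁ + 2 * d ≤ θ₀ := by simp only [d]; linarith
  obtain ⟨K, hF⟩ := exists_integral_nnPosterior_Iic_le (μ₀ := μ₀) hσ.ne' hτ.ne' hd hgap
  have hsmall : ∀ᶠ n : ℕ in atTop, F n + Φ n ≤ (n : ℝ) ^ (-(1 : ℝ) / 2) := by
    filter_upwards [eventually_mul_pow_le_rpow_neg_half (exp_pos (-d ^ 2 / (2 * σ₀ ^ 2))).le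
      (exp_lt_one_iff.mpr (div_neg_of_neg_of_pos (neg_neg_of_pos (by positivity))
        (by positivity))) K 3, eventually_ne_atTop 0] with n hn hn0
    rw [← Real.exp_nat_mul, mul_div_assoc', mul_neg] at hn
    linarith [hF n hn0, stdNormalCDF_le_exp_of_add_two_mul_le hσ hgap hd.le n]
  obtain ⟨N, hN⟩ := eventually_atTop.mp hsmall
  have hF0 : ∀ n, 0 ≤ F n := fun n => integral_nonneg fun _ => ENNReal.toReal_nonneg
  have hΦ0 : ∀ n, 0 ≤ Φ n := fun n => stdNormalCDF_nonneg _
  simp_rw [integral_nnPosterior_Ioi hτ.ne']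
  refine ⟨⟨1, one_pos, N, fun n hn => ?_⟩, ?_⟩
  · rw [one_mul, sub_sub_sub_cancel_left, abs_sub_le_iff]
    constructor <;> linarith [hN n hn, hF0 n, hΦ0 n]
  · have hrpow : Tendsto (fun n : ℕ => (n : ℝ) ^ (-(1 : ℝ) / 2)) atTop (𝓝 0) := by
      rw [neg_div]
      exact (tendsto_rpow_neg_atTop one_half_pos).comp tendsto_natCast_atTop_atTop
    have hF_lim : Tendsto F atTop (𝓝 0) := squeeze_zero' (Eventually.of_forall hF0)
      (hsmall.mono fun n hn => by linarith [hΦ0 n]) hrpow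
    simpa using tendsto_const_nhds.sub hF_lim
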